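/- arXiv:1904.09222 — 4 statements merged into one kernel-verified Lean document; each statement's English description precedes it below -/
import Mathlib

section
/- Let c(m) = ⌊m/e⌋ and H_k = Σ_{i=1}^{k} 1/i. Then lim_{m→∞} m / (m + c(m)·(H_{c(m)} − H_m)) = e/(e−1). -/
/-- The `k`-th harmonicNum number `H_k = ∑_{i=1}^k 1/i`. -/
noncomputable def harmonicNum (k : ℕ) : ℝ := ∑ i ∈ Finset.range k, (1 : ℝ) / (i + 1)

/-- `c(m) = ⌊m/e⌋`. -/
noncomputable def cfun (m : ℕ) : ℕ := ⌊(m : ℝ) / Real.exp 1⌋₊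

open Filter Real

lemma harmonicNum_eq (k : ℕ) : harmonicNum k = ((harmonic k : ℚ) : ℝ) := by
  unfold harmonicNum harmonic
  push_cast
  simp [one_div]

lemma cfun_atTop : Tendsto (fun m : ℕ => cfun m) atTop atTop := by
  apply tendsto_nat_floor_atTop.comp
  exact Tendsto.atTop_div_const (exp_pos 1) tendsto_natCast_atTop_atTop

lemma ratio_tendsto : Tendsto (fun m : ℕ => (cfun m : ℝ) / m) atTop (nhds (1 / exp 1)) := by
  have hlo : Tendsto (fun m : ℕ => 1 / exp 1 - 1 / (m : ℝ)) atTop (nhds (1 / exp 1)) := by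
    simpa using tendsto_const_nhds.sub (tendsto_one_div_atTop_nhds_zero_nat : Tendsto (fun n : ℕ => 1 / (n : ℝ)) atTop (nhds 0))
  refine tendsto_of_tendsto_of_tendsto_of_le_of_le' hlo tendsto_const_nhds ?_ ?_
  · filter_upwards [eventually_ge_atTop 1] with m hm
    have hm0 : (0 : ℝ) < m := by exact_mod_cast hm
    have h := Nat.sub_one_lt_floor ((m : ℝ) / exp 1)
    have : (m : ℝ) / exp 1 - 1 ≤ (cfun m : ℝ) := le_of_lt h
    rw [div_sub_div _ _ (ne_of_gt (exp_pos 1)) (ne_of_gt hm0)]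
    rw [div_le_div_iff₀ (by positivity) hm0]
    have h1 : (m : ℝ) - exp 1 ≤ (cfun m : ℝ) * exp 1 := by
      have h2 := mul_le_mul_of_nonneg_right this (exp_pos 1).le
      rwa [sub_mul, one_mul, div_mul_cancel₀ _ (ne_of_gt (exp_pos 1))] at h2
    nlinarith [mul_le_mul_of_nonneg_right h1 hm0.le]
  · filter_upwards [eventually_ge_atTop 1] with m hm
    have hm0 : (0 : ℝ) < m := by exact_mod_cast hm
    have h : (cfun m : ℝ) ≤ (m : ℝ) / exp 1 := Nat.floor_le (by positivity)
    rw [div_le_div_iff₀ hm0 (exp_pos 1)]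
    have h2 := mul_le_mul_of_nonneg_right h (exp_pos 1).le
    rw [div_mul_cancel₀ _ (ne_of_gt (exp_pos 1))] at h2
    linarith

theorem dual_value_tendsto_e_div_e_sub_one :
    Filter.Tendsto
      (fun m : ℕ =>
        (m : ℝ) / ((m : ℝ) + (cfun m : ℝ) * (harmonicNum (cfun m) - harmonicNum m)))
      Filter.atTop (nhds (Real.exp 1 / (Real.exp 1 - 1))) := by
  have hHc : Tendsto (fun m : ℕ => harmonicNum (cfun m) - log (cfun m)) atTop
      (nhds eulerMascheroniConstant) := by
    have := tendsto_harmonic_sub_log.comp cfun_atTop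
    refine this.congr fun m => ?_
    simp [Function.comp, harmonicNum_eq]
  have hHm : Tendsto (fun m : ℕ => harmonicNum m - log m) atTop
      (nhds eulerMascheroniConstant) := by
    refine tendsto_harmonic_sub_log.congr fun m => ?_
    simp [harmonicNum_eq]
  have hlog : Tendsto (fun m : ℕ => log (cfun m) - log m) atTop (nhds (-1)) := by
    have hcont : Tendsto (fun m : ℕ => log ((cfun m : ℝ) / m)) atTop (nhds (-1)) := by
      have := (Real.continuousAt_log (x := 1 / exp 1) (by positivity)).tendsto.comp
        ratio_tendsto
      simpa [Function.comp_def, one_div, Real.log_inv, Real.log_exp] using this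
    refine hcont.congr' ?_
    have h1 : ∀ᶠ m : ℕ in atTop, 1 ≤ cfun m := cfun_atTop.eventually_ge_atTop 1
    filter_upwards [h1, eventually_ge_atTop 1] with m hc hm
    have hc0 : (0 : ℝ) < (cfun m : ℝ) := by exact_mod_cast hc
    have hm0 : (0 : ℝ) < (m : ℝ) := by exact_mod_cast hm
    rw [Real.log_div (ne_of_gt hc0) (ne_of_gt hm0)]
  have hdiff : Tendsto (fun m : ℕ => harmonicNum (cfun m) - harmonicNum m) atTop
      (nhds (-1)) := by
    have := (hHc.sub hHm).add hlog
    simp only [sub_self, zero_add] at this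
    refine this.congr fun m => ?_
    ring
  have hden : Tendsto (fun m : ℕ =>
      1 + (cfun m : ℝ) / m * (harmonicNum (cfun m) - harmonicNum m)) atTop
      (nhds (1 + 1 / exp 1 * (-1))) :=
    tendsto_const_nhds.add (ratio_tendsto.mul hdiff)
  have hval : (1 : ℝ) + 1 / exp 1 * (-1) = (exp 1 - 1) / exp 1 := by
    field_simp
    ring
  rw [hval] at hden
  have hne : (exp 1 - 1) / exp 1 ≠ 0 := by
    have h1 : (1 : ℝ) < exp 1 := by
      have := Real.add_one_lt_exp (x := 1) one_ne_zero
      linarith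
    have h2 : (0:ℝ) < exp 1 - 1 := by linarith
    positivity
  have hfin : Tendsto (fun m : ℕ =>
      1 / (1 + (cfun m : ℝ) / m * (harmonicNum (cfun m) - harmonicNum m))) atTop
      (nhds (1 / ((exp 1 - 1) / exp 1))) :=
    tendsto_const_nhds.div hden hne
  have hval2 : (1 : ℝ) / ((exp 1 - 1) / exp 1) = exp 1 / (exp 1 - 1) := one_div_div _ _
  rw [hval2] at hfin
  refine hfin.congr' ?_
  filter_upwards [eventually_ge_atTop 1] with m hm
  have hm0 : (0 : ℝ) < (m : ℝ) := by exact_mod_cast hm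
  have : (1 : ℝ) + (cfun m : ℝ) / m * (harmonicNum (cfun m) - harmonicNum m)
      = ((m : ℝ) + (cfun m : ℝ) * (harmonicNum (cfun m) - harmonicNum m)) / m := by
    field_simp
  rw [this, one_div_div]
end

section
/- Let x_{kj} ≥ 0 for 1 ≤ j ≤ k ≤ m be real numbers satisfying: Σ_{j=1}^{k} x_{kj} ≥ 1 for all 1 ≤ k ≤ m; k·x_{kj} ≤ α for all 1 ≤ j ≤ k ≤ m; and Σ_{k=j}^{m} x_{kj} ≤ α for all 1 ≤ j ≤ m. Then α ≥ m·t where t = 1/(m + 1 + c·(H_c − H_m)) for any 1 ≤ c ≤ m, with H_k the k-th harmonic number. -/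
open Finset

/-- Weak LP duality step: any feasible primal solution of the LP lower-bounding the
competitive ratio of online fractional edge coloring has `α ≥ m·t`, where
`t = 1/(m + 1 + c·(H_c − H_m))`. -/
theorem primal_ge_dual_value (m c : ℕ) (hm : 1 ≤ m) (hc1 : 1 ≤ c) (hcm : c ≤ m)
    (H : ℕ → ℝ) (hH : ∀ k, H k = ∑ i ∈ Finset.range k, (1 : ℝ) / (i + 1))
    (x : ℕ → ℕ → ℝ) (α : ℝ)
    (hxnn : ∀ k j, 1 ≤ j → j ≤ k → k ≤ m → 0 ≤ x k j)
    (hcover : ∀ k, 1 ≤ k → k ≤ m → 1 ≤ ∑ j ∈ Finset.Icc 1 k, x k j)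
    (hcap1 : ∀ k j, 1 ≤ j → j ≤ k → k ≤ m → (k : ℝ) * x k j ≤ α)
    (hcap2 : ∀ j, 1 ≤ j → j ≤ m → ∑ k ∈ Finset.Icc j m, x k j ≤ α) :
    (m : ℝ) * (1 / ((m : ℝ) + 1 + (c : ℝ) * (H c - H m))) ≤ α := by
  set R : ℝ := ∑ k ∈ Ioc c m, (1 : ℝ) / k with hRdef
  -- H m - H c = R
  have hHR : H m - H c = R := by
    rw [hH, hH, ← Finset.sum_range_add_sum_Ico _ hcm]
    have : ∑ i ∈ Ico c m, (1 : ℝ) / (i + 1) = R := by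
      rw [hRdef, ← Finset.Ico_add_one_add_one_eq_Ioc]
      rw [← Finset.map_add_right_Ico _ _ 1, Finset.sum_map]
      push_cast
      simp
    rw [this]; ring
  -- bound c·R ≤ m - c
  have hcmR : (c : ℝ) * R ≤ (m : ℝ) - c := by
    rw [hRdef, Finset.mul_sum]
    calc ∑ k ∈ Ioc c m, (c : ℝ) * (1 / k) ≤ ∑ k ∈ Ioc c m, (1 : ℝ) := by
          refine Finset.sum_le_sum fun k hk => ?_
          simp only [Finset.mem_Ioc] at hk
          have hk0 : (0 : ℝ) < k := by
            have : 0 < k := lt_of_le_of_lt (Nat.zero_le c) hk.1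
            exact_mod_cast this
          rw [mul_one_div, div_le_one hk0]
          exact_mod_cast hk.1.le
      _ = ((m - c : ℕ) : ℝ) := by
          rw [Finset.sum_const, Nat.card_Ioc, nsmul_eq_mul, mul_one]
      _ = (m : ℝ) - c := by rw [Nat.cast_sub hcm]
  -- α ≥ 0
  have hα0 : 0 ≤ α := by
    refine le_trans ?_ (hcap2 1 le_rfl hm)
    refine Finset.sum_nonneg fun k hk => ?_
    simp only [Finset.mem_Icc] at hk
    exact hxnn k 1 le_rfl hk.1 hk.2
  -- key inequality: m ≤ α * (m - c * R)
  have key : (m : ℝ) ≤ α * ((m : ℝ) - c * R) := by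
    have step1 : (m : ℝ) ≤ ∑ k ∈ Icc 1 m, ∑ j ∈ Icc 1 k, x k j := by
      calc (m : ℝ) = ∑ k ∈ Icc 1 m, (1 : ℝ) := by
            rw [Finset.sum_const, Nat.card_Icc, nsmul_eq_mul, mul_one]; norm_num
        _ ≤ _ := Finset.sum_le_sum fun k hk => by
            simp only [Finset.mem_Icc] at hk
            exact hcover k hk.1 hk.2
    -- split each inner sum
    have split : ∀ k ∈ Icc 1 m, ∑ j ∈ Icc 1 k, x k j =
        (∑ j ∈ Ioc 0 (min c k), x k j) + ∑ j ∈ Ioc (min c k) k, x k j := by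
      intro k _
      rw [← Finset.Ico_add_one_add_one_eq_Ioc, Finset.Ico_add_one_right_eq_Icc]
      exact (Finset.sum_Ioc_consecutive _ (Nat.zero_le _) (min_le_right c k)).symm
    rw [Finset.sum_congr rfl split, Finset.sum_add_distrib] at step1
    -- first part: ≤ c * α
    have hT1 : ∑ k ∈ Icc 1 m, ∑ j ∈ Ioc 0 (min c k), x k j ≤ (c : ℝ) * α := by
      have e1 : ∀ k ∈ Icc 1 m, ∑ j ∈ Ioc 0 (min c k), x k j =
          ∑ j ∈ Icc 1 c, if j ≤ k then x k j else 0 := by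
        intro k _
        rw [← Finset.sum_filter]
        congr 1
        ext j
        simp only [Finset.mem_Ioc, Finset.mem_filter, Finset.mem_Icc]
        omega
      rw [Finset.sum_congr rfl e1, Finset.sum_comm]
      calc ∑ j ∈ Icc 1 c, ∑ k ∈ Icc 1 m, (if j ≤ k then x k j else 0)
          ≤ ∑ j ∈ Icc 1 c, α := by
            refine Finset.sum_le_sum fun j hj => ?_
            simp only [Finset.mem_Icc] at hj
            have : ∑ k ∈ Icc 1 m, (if j ≤ k then x k j else 0)
                = ∑ k ∈ Icc j m, x k j := by
              rw [← Finset.sum_filter]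
              congr 1
              ext k
              simp only [Finset.mem_filter, Finset.mem_Icc]
              omega
            rw [this]
            exact hcap2 j hj.1 (hj.2.trans hcm)
        _ = (c : ℝ) * α := by
            rw [Finset.sum_const, Nat.card_Icc, nsmul_eq_mul]; norm_num
    -- second part
    have hT2 : ∑ k ∈ Icc 1 m, ∑ j ∈ Ioc (min c k) k, x k j ≤
        ((m : ℝ) - c) * α - c * α * R := by
      have esplit : ∑ k ∈ Icc 1 m, ∑ j ∈ Ioc (min c k) k, x k j =
          (∑ k ∈ Ioc 0 c, ∑ j ∈ Ioc (min c k) k, x k j) +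
          ∑ k ∈ Ioc c m, ∑ j ∈ Ioc (min c k) k, x k j := by
        rw [← Finset.Ico_add_one_add_one_eq_Ioc, Finset.Ico_add_one_right_eq_Icc]
        exact (Finset.sum_Ioc_consecutive _ (Nat.zero_le _) hcm).symm
      have ezero : ∑ k ∈ Ioc 0 c, ∑ j ∈ Ioc (min c k) k, x k j = 0 := by
        refine Finset.sum_eq_zero fun k hk => ?_
        simp only [Finset.mem_Ioc] at hk
        rw [min_eq_right hk.2]
        simp
      rw [esplit, ezero, zero_add]
      calc ∑ k ∈ Ioc c m, ∑ j ∈ Ioc (min c k) k, x k j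
          ≤ ∑ k ∈ Ioc c m, (α - (c : ℝ) * α * (1 / k)) := by
            refine Finset.sum_le_sum fun k hk => ?_
            simp only [Finset.mem_Ioc] at hk
            have hk0 : (0 : ℝ) < k := by
              have : 0 < k := lt_of_le_of_lt (Nat.zero_le c) hk.1
              exact_mod_cast this
            rw [min_eq_left hk.1.le]
            calc ∑ j ∈ Ioc c k, x k j ≤ ∑ j ∈ Ioc c k, α * (1 / (k : ℝ)) := by
                  refine Finset.sum_le_sum fun j hj => ?_
                  simp only [Finset.mem_Ioc] at hj
                  rw [mul_one_div, le_div_iff₀ hk0, mul_comm]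
                  exact hcap1 k j (le_trans hc1 hj.1.le) hj.2 hk.2
              _ = ((k - c : ℕ) : ℝ) * (α * (1 / (k : ℝ))) := by
                  rw [Finset.sum_const, Nat.card_Ioc, nsmul_eq_mul]
              _ = α - (c : ℝ) * α * (1 / k) := by
                  rw [Nat.cast_sub hk.1.le]
                  field_simp
        _ = ((m : ℝ) - c) * α - c * α * R := by
            rw [Finset.sum_sub_distrib, ← Finset.mul_sum, ← hRdef, Finset.sum_const,
              Nat.card_Ioc, nsmul_eq_mul]
            rw [Nat.cast_sub hcm]
            try ring
    have : (m : ℝ) ≤ (c : ℝ) * α + (((m : ℝ) - c) * α - c * α * R) :=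
      step1.trans (add_le_add hT1 hT2)
    nlinarith [this]
  -- conclude
  have hS : (c : ℝ) ≤ (m : ℝ) - c * R := by
    have : (c : ℝ) ≤ m := by exact_mod_cast hcm
    linarith
  have hc0 : (0 : ℝ) < c := by exact_mod_cast hc1
  have hE : (c : ℝ) * (H c - H m) = -(c * R) := by rw [← hHR]; ring
  rw [hE]
  have hD : (0 : ℝ) < (m : ℝ) + 1 + -(c * R) := by linarith
  rw [mul_one_div, div_le_iff₀ hD]
  nlinarith [key, hα0]
end

section
/- Let X₁,…,Xₙ be zero-one random variables such that X₁ + ⋯ + Xₙ ≤ 1 always. Then X₁,…,Xₙ are negatively associated: for any two functions f, g both monotone increasing (or both monotone decreasing) depending on disjoint subsets of the variables, E[f(X)·g(X)] ≤ E[f(X)]·E[g(X)]. -/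
open MeasureTheory

/-- Negative association of a finite family of real random variables: for any two
concordant monotone functions `f`, `g` depending on disjoint subsets of the variables,
`E[f(X)·g(X)] ≤ E[f(X)]·E[g(X)]`. -/
def NegAssoc {Ω : Type} [MeasurableSpace Ω] (μ : Measure Ω)
    {ι : Type} [Fintype ι] (X : ι → Ω → ℝ) : Prop :=
  ∀ (S T : Finset ι), Disjoint S T →
    ∀ f g : (ι → ℝ) → ℝ,
      ((Monotone f ∧ Monotone g) ∨ (Antitone f ∧ Antitone g)) →
      (∀ x y : ι → ℝ, (∀ i ∈ S, x i = y i) → f x = f y) →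
      (∀ x y : ι → ℝ, (∀ i ∈ T, x i = y i) → g x = g y) →
      Integrable (fun ω => f fun i => X i ω) μ →
      Integrable (fun ω => g fun i => X i ω) μ →
      Integrable (fun ω => (f fun i => X i ω) * g fun i => X i ω) μ →
      ∫ ω, (f fun i => X i ω) * (g fun i => X i ω) ∂μ ≤
        (∫ ω, (f fun i => X i ω) ∂μ) * ∫ ω, (g fun i => X i ω) ∂μ

/-- The zero-one rule: zero-one random variables whose sum is always at most one are
negatively associated. -/
theorem zero_one_rule_negAssoc {Ω : Type} [MeasurableSpace Ω]
    (μ : Measure Ω) [IsProbabilityMeasure μ] (n : ℕ) (X : Fin n → Ω → ℝ)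
    (hmeas : ∀ i, Measurable (X i))
    (hbin : ∀ i ω, X i ω = 0 ∨ X i ω = 1)
    (hsum : ∀ ω, ∑ i, X i ω ≤ 1) :
    NegAssoc μ X := by
  classical
  intro S T hST f g hmono hfS hgT _ _ _
  -- events where X j = 1
  set A : Fin n → Set Ω := fun j => {ω | X j ω = 1} with hA
  have hAmeas : ∀ j, MeasurableSet (A j) := fun j => (hmeas j) (measurableSet_singleton 1)
  -- at most one coordinate is 1
  have huniq : ∀ ω i j, X i ω = 1 → X j ω = 1 → i = j := by
    intro ω i j hi hj
    by_contra hij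
    have h2 : (2:ℝ) ≤ ∑ k, X k ω := by
      have hpair : ∑ k ∈ ({i, j} : Finset (Fin n)), X k ω = 2 := by
        rw [Finset.sum_pair hij, hi, hj]; norm_num
      calc (2:ℝ) = ∑ k ∈ ({i, j} : Finset (Fin n)), X k ω := hpair.symm
        _ ≤ ∑ k, X k ω := Finset.sum_le_sum_of_subset_of_nonneg (Finset.subset_univ _)
            (fun k _ _ => by rcases hbin k ω with h | h <;> simp [h])
    linarith [hsum ω]
  -- unit vectors
  set e : Fin n → Fin n → ℝ := fun j i => if i = j then 1 else 0 with he
  -- key: integral formula for any function of X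
  have key : ∀ h : (Fin n → ℝ) → ℝ,
      ∫ ω, h (fun i => X i ω) ∂μ
        = h 0 + ∑ j, (μ (A j)).toReal * (h (e j) - h 0) := by
    intro h
    have hpt : ∀ ω, h (fun i => X i ω)
        = h 0 + ∑ j, (A j).indicator (fun _ => h (e j) - h 0) ω := by
      intro ω
      by_cases hω : ∃ j, X j ω = 1
      · obtain ⟨j, hj⟩ := hω
        have hvec : (fun i => X i ω) = e j := by
          funext i
          by_cases hij : i = j
          · subst hij; simp [he, hj]
          · rcases hbin i ω with h0 | h1
            · simp [he, hij, h0]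
            · exact absurd (huniq ω i j h1 hj) hij
        have hsum' : ∑ k, (A k).indicator (fun _ => h (e k) - h 0) ω = h (e j) - h 0 := by
          rw [Finset.sum_eq_single j]
          · exact Set.indicator_of_mem (show ω ∈ A j from hj) _
          · intro k _ hk
            refine Set.indicator_of_notMem ?_ _
            intro hmem
            exact hk (huniq ω k j hmem hj)
          · intro hj'; exact absurd (Finset.mem_univ j) hj'
        rw [hvec, hsum']; ring
      · push_neg at hω
        have hvec : (fun i => X i ω) = 0 :=
          funext fun i => (hbin i ω).resolve_right (hω i)
        have hnot : ∀ k, ω ∉ A k := fun k => hω k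
        simp [hvec, Set.indicator_of_notMem (hnot _)]
    calc ∫ ω, h (fun i => X i ω) ∂μ
        = ∫ ω, (h 0 + ∑ j, (A j).indicator (fun _ => h (e j) - h 0) ω) ∂μ := by
          exact integral_congr_ae (Filter.Eventually.of_forall hpt)
      _ = h 0 + ∑ j, (μ (A j)).toReal * (h (e j) - h 0) := by
          rw [integral_add (integrable_const _)
              (integrable_finset_sum _ fun j _ => (integrable_const _).indicator (hAmeas j)),
            integral_const,
            integral_finset_sum _ (fun j _ => (integrable_const _).indicator (hAmeas j))]
          simp [integral_indicator_const _ (hAmeas _), smul_eq_mul, Measure.real]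
  have h1 : ∫ ω, (f fun i => X i ω) ∂μ
      = f 0 + ∑ j, (μ (A j)).toReal * (f (e j) - f 0) := key f
  have h2 : ∫ ω, (g fun i => X i ω) ∂μ
      = g 0 + ∑ j, (μ (A j)).toReal * (g (e j) - g 0) := key g
  have h3 : ∫ ω, (f fun i => X i ω) * (g fun i => X i ω) ∂μ
      = f 0 * g 0 + ∑ j, (μ (A j)).toReal * (f (e j) * g (e j) - f 0 * g 0) :=
    key (fun x => f x * g x)
  -- a_j b_j = 0 since S, T disjoint
  have hab : ∀ j, (f (e j) - f 0) * (g (e j) - g 0) = 0 := by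
    intro j
    have hcase : j ∉ S ∨ j ∉ T := by
      by_contra hc
      push_neg at hc
      exact (Finset.disjoint_left.mp hST hc.1) hc.2
    rcases hcase with hjS | hjT
    · have : f (e j) = f 0 := by
        apply hfS
        intro i hi
        have : i ≠ j := fun hij => hjS (hij ▸ hi)
        simp [he, this]
      rw [this]; ring
    · have : g (e j) = g 0 := by
        apply hgT
        intro i hi
        have : i ≠ j := fun hij => hjT (hij ▸ hi)
        simp [he, this]
      rw [this]; ring
  -- rewrite the product-sum
  have hsum3 : ∑ j, (μ (A j)).toReal * (f (e j) * g (e j) - f 0 * g 0)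
      = g 0 * (∑ j, (μ (A j)).toReal * (f (e j) - f 0))
        + f 0 * (∑ j, (μ (A j)).toReal * (g (e j) - g 0)) := by
    rw [Finset.mul_sum, Finset.mul_sum, ← Finset.sum_add_distrib]
    refine Finset.sum_congr rfl fun j _ => ?_
    have := hab j
    linear_combination (μ (A j)).toReal * this
  -- sign of the sums
  have hprod : 0 ≤ (∑ j, (μ (A j)).toReal * (f (e j) - f 0))
      * (∑ j, (μ (A j)).toReal * (g (e j) - g 0)) := by
    have h0e : ∀ j, (0 : Fin n → ℝ) ≤ e j := by
      intro j i
      simp only [he, Pi.zero_apply]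
      split <;> norm_num
    rcases hmono with ⟨hmf, hmg⟩ | ⟨haf, hag⟩
    · apply mul_nonneg <;>
      · apply Finset.sum_nonneg
        intro j _
        apply mul_nonneg ENNReal.toReal_nonneg
        first
        | linarith [hmf (h0e j)]
        | linarith [hmg (h0e j)]
    · have hx : (∑ j, (μ (A j)).toReal * (f (e j) - f 0)) ≤ 0 := by
        apply Finset.sum_nonpos
        intro j _
        apply mul_nonpos_of_nonneg_of_nonpos ENNReal.toReal_nonneg
        linarith [haf (h0e j)]
      have hy : (∑ j, (μ (A j)).toReal * (g (e j) - g 0)) ≤ 0 := by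
        apply Finset.sum_nonpos
        intro j _
        apply mul_nonpos_of_nonneg_of_nonpos ENNReal.toReal_nonneg
        linarith [hag (h0e j)]
      nlinarith
  rw [h1, h2, h3, hsum3]
  nlinarith [hprod]
end

section
/- If X₁,…,Xₙ are negatively associated, then they are negatively upper orthant dependent: for all real x₁,…,xₙ, P[⋀ᵢ Xᵢ ≥ xᵢ] ≤ ∏ᵢ P[Xᵢ ≥ xᵢ]. -/
open MeasureTheory

/-- Negatively associated random variables are negatively upper orthant dependent:
`P[⋀ i, X i ≥ x i] ≤ ∏ i, P[X i ≥ x i]`. -/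
theorem negAssoc_nuod {Ω : Type} [MeasurableSpace Ω]
    (μ : Measure Ω) [IsProbabilityMeasure μ]
    {ι : Type} [Fintype ι] (X : ι → Ω → ℝ)
    (hmeas : ∀ i, Measurable (X i))
    (hNA : NegAssoc μ X) :
    ∀ x : ι → ℝ, μ {ω | ∀ i, x i ≤ X i ω} ≤ ∏ i, μ {ω | x i ≤ X i ω} := by
  intro x
  classical
  set F : Finset ι → (ι → ℝ) → ℝ := fun s v => ∏ i ∈ s, if x i ≤ v i then (1:ℝ) else 0 with hF
  have hmono : ∀ s, Monotone (F s) := by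
    intro s v w hvw
    apply Finset.prod_le_prod
    · intro i _; split_ifs <;> norm_num
    · intro i _
      split_ifs with h1 h2 <;> norm_num
      exact h2 (h1.trans (hvw i))
  have hdep : ∀ s, ∀ v w : ι → ℝ, (∀ i ∈ s, v i = w i) → F s v = F s w := by
    intro s v w h
    exact Finset.prod_congr rfl fun i hi => by rw [h i hi]
  have hAmeas : ∀ s : Finset ι, MeasurableSet {ω | ∀ i ∈ s, x i ≤ X i ω} := by
    intro s
    have : {ω | ∀ i ∈ s, x i ≤ X i ω} = ⋂ i ∈ s, {ω | x i ≤ X i ω} := by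
      ext ω; simp
    rw [this]
    exact MeasurableSet.biInter s.countable_toSet fun i _ =>
      measurableSet_le measurable_const (hmeas i)
  have hcomp : ∀ s : Finset ι, (fun ω => F s fun i => X i ω) =
      Set.indicator {ω | ∀ i ∈ s, x i ≤ X i ω} (fun _ => (1:ℝ)) := by
    intro s
    funext ω
    by_cases h : ∀ i ∈ s, x i ≤ X i ω
    · rw [Set.indicator_of_mem (show ω ∈ {ω | ∀ i ∈ s, x i ≤ X i ω} from h)]
      exact Finset.prod_eq_one fun i hi => if_pos (h i hi)
    · rw [Set.indicator_of_notMem (show ω ∉ {ω | ∀ i ∈ s, x i ≤ X i ω} from h)]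
      push_neg at h
      obtain ⟨i, hi, hxi⟩ := h
      exact Finset.prod_eq_zero hi (if_neg (not_le.mpr hxi))
  have hint : ∀ s : Finset ι, Integrable (fun ω => F s fun i => X i ω) μ := by
    intro s
    rw [hcomp s]
    exact (integrable_const (1:ℝ)).indicator (hAmeas s)
  have hIeq : ∀ s : Finset ι, ∫ ω, (F s fun i => X i ω) ∂μ =
      (μ {ω | ∀ i ∈ s, x i ≤ X i ω}).toReal := by
    intro s
    rw [hcomp s]
    exact integral_indicator_one (hAmeas s)
  have hprod : ∀ (j : ι) (t : Finset ι), j ∉ t → ∀ v : ι → ℝ,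
      F {j} v * F t v = F (insert j t) v := by
    intro j t hj v
    rw [hF]
    simp only [Finset.prod_singleton, Finset.prod_insert hj]
  have key : ∀ s : Finset ι, (μ {ω | ∀ i ∈ s, x i ≤ X i ω}).toReal ≤
      ∏ i ∈ s, (μ {ω | x i ≤ X i ω}).toReal := by
    intro s
    induction s using Finset.induction_on with
    | empty => simp
    | @insert j t hj ih =>
      have hNAapp := hNA {j} t (Finset.disjoint_singleton_left.mpr hj)
        (F {j}) (F t) (Or.inl ⟨hmono _, hmono _⟩)
        (fun v w h => hdep {j} v w h) (fun v w h => hdep t v w h)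
        (hint {j}) (hint t)
        (by
          have : (fun ω => (F {j} fun i => X i ω) * F t fun i => X i ω) =
              (fun ω => F (insert j t) fun i => X i ω) := by
            funext ω; exact hprod j t hj _
          rw [this]; exact hint _)
      have heq : (fun ω => (F {j} fun i => X i ω) * F t fun i => X i ω) =
          (fun ω => F (insert j t) fun i => X i ω) := by
        funext ω; exact hprod j t hj _
      rw [show ∫ ω, (F {j} fun i => X i ω) * (F t fun i => X i ω) ∂μ =
          ∫ ω, (F (insert j t) fun i => X i ω) ∂μ from by rw [← heq],
        hIeq, hIeq, hIeq] at hNAapp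
      have hsing : {ω | ∀ i ∈ ({j} : Finset ι), x i ≤ X i ω} = {ω | x j ≤ X j ω} := by
        ext ω; simp
      rw [hsing] at hNAapp
      rw [Finset.prod_insert hj]
      refine hNAapp.trans ?_
      exact mul_le_mul_of_nonneg_left ih ENNReal.toReal_nonneg
  have h := key Finset.univ
  have huniv : {ω | ∀ i ∈ (Finset.univ : Finset ι), x i ≤ X i ω} = {ω | ∀ i, x i ≤ X i ω} := by
    ext ω; simp
  rw [huniv, ← ENNReal.toReal_prod] at h
  have hne : (∏ i, μ {ω | x i ≤ X i ω}) ≠ ⊤ := by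
    refine (ENNReal.prod_lt_top fun i _ => ?_).ne
    exact measure_lt_top μ _
  exact (ENNReal.toReal_le_toReal (measure_ne_top μ _) hne).mp h
end
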